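/- arXiv:1808.05091 — 2 statements merged into one kernel-verified Lean document; each statement's English description precedes it below -/
import Mathlib

section
/- The function \psi(t) = Q(t) - t = (3t + 2(1-t)^{3/2} - t^3 - 2)/t^2 is strictly decreasing on (0,1). -/
/-!
With `u = √(1 - t)` one has `t = (1 - u)(1 + u)`, and the numerator of `ψ` factors as
`(1 - u)² u³ (u + 2)`. Since `u (u + 2) = (1 + u)² - 1`, this gives
`ψ(t) = (1 - t) (1 - 1 / (1 + √(1 - t))²)`, a product of two positive strictly decreasing
functions of `t` on `(0, 1)`.
-/

open Real

lemma psi_eq_mul {t : ℝ} (ht0 : t ≠ 0) (ht1 : t ≤ 1) :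
    (3 * t + 2 * √((1 - t) ^ 3) - t ^ 3 - 2) / t ^ 2
      = (1 - t) * (1 - ((1 + √(1 - t)) ^ 2)⁻¹) := by
  set u := √(1 - t)
  have hu0 : 0 ≤ u := sqrt_nonneg _
  have hu2 : u ^ 2 = 1 - t := sq_sqrt (by linarith)
  have hcube : √((1 - t) ^ 3) = u ^ 3 := by
    rw [← hu2, ← pow_mul, show 2 * 3 = 3 * 2 by rfl, pow_mul, sqrt_sq (by positivity)]
  have ht : t = 1 - u ^ 2 := by linarith
  have ht0' : 1 - u ^ 2 ≠ 0 := ht ▸ ht0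
  rw [hcube, ht]
  field_simp
  ring

lemma one_sub_inv_sq_one_add_sqrt_one_sub_pos {t : ℝ} (ht : t < 1) :
    0 < 1 - ((1 + √(1 - t)) ^ 2)⁻¹ := by
  have hu : 0 < √(1 - t) := sqrt_pos.mpr (by linarith)
  have : 1 < (1 + √(1 - t)) ^ 2 := by nlinarith
  linarith [inv_lt_one_of_one_lt₀ this]

lemma strictAntiOn_one_sub_inv_sq_one_add_sqrt_one_sub :
    StrictAntiOn (fun t : ℝ => 1 - ((1 + √(1 - t)) ^ 2)⁻¹) (Set.Iic 1) := by
  intro a _ b hb hab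
  have hsqrt : √(1 - b) < √(1 - a) := sqrt_lt_sqrt (by linarith [Set.mem_Iic.mp hb]) (by linarith)
  have hsq : (1 + √(1 - b)) ^ 2 < (1 + √(1 - a)) ^ 2 := by gcongr
  simp only [sub_lt_sub_iff_left]
  exact inv_strictAntiOn (Set.mem_Ioi.mpr (by positivity)) (Set.mem_Ioi.mpr (by positivity)) hsq

theorem psi_strictAntiOn :
    StrictAntiOn (fun t : ℝ => (3 * t + 2 * Real.sqrt ((1 - t) ^ 3) - t ^ 3 - 2) / t ^ 2)
      (Set.Ioo 0 1) := by
  intro a ha b hb hab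
  simp only [psi_eq_mul ha.1.ne' ha.2.le, psi_eq_mul hb.1.ne' hb.2.le]
  have hfactor := strictAntiOn_one_sub_inv_sq_one_add_sqrt_one_sub
    (Set.mem_Iic.mpr ha.2.le) (Set.mem_Iic.mpr hb.2.le) hab
  exact mul_lt_mul'' (by linarith) hfactor (by linarith [hb.2])
    (one_sub_inv_sq_one_add_sqrt_one_sub_pos hb.2).le
end

section
/- For all real x \geq 4, x - 2y_1 + z_2 < 0, where y_1 = x + \pi^2/(2x) - \pi^4/(8x^3) + \pi^6/(16x^5) - 5\pi^8/(128x^7) + 7\pi^{10}/(256x^9) - 21\pi^{12}/(1024x^{11}) and z_2 = x + \pi^2/x - \pi^4/(2x^3) + \pi^6/(2x^5) - 5\pi^8/(8x^7) + 7\pi^{10}/(8x^9). -/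
/-!
Clearing denominators, `x - 2 y₁ + z₂ = -π⁴ Q(x², π²) / (512 x¹¹)` for the quartic form `Q` below.
Writing `a = 8b/5 + s` turns `Q(a, b)` into a form in `b, s` with positive coefficients, so
`Q(a, b) > 0` once `5a ≥ 8b`; for `a = x² ≥ 16` and `b = π² < 10` this holds.
-/

open Real

def remainderQuartic (a b : ℝ) : ℝ :=
  128 * a ^ 4 - 192 * a ^ 3 * b + 280 * a ^ 2 * b ^ 2 - 420 * a * b ^ 3 - 21 * b ^ 4

lemma sub_two_mul_add_eq_remainderQuartic (c x : ℝ) (hx : x ≠ 0) :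
    x - 2 * (x + c ^ 2 / (2 * x) - c ^ 4 / (8 * x ^ 3) + c ^ 6 / (16 * x ^ 5)
        - 5 * c ^ 8 / (128 * x ^ 7) + 7 * c ^ 10 / (256 * x ^ 9)
        - 21 * c ^ 12 / (1024 * x ^ 11))
      + (x + c ^ 2 / x - c ^ 4 / (2 * x ^ 3) + c ^ 6 / (2 * x ^ 5)
        - 5 * c ^ 8 / (8 * x ^ 7) + 7 * c ^ 10 / (8 * x ^ 9))
      = -(c ^ 4 * remainderQuartic (x ^ 2) (c ^ 2)) / (512 * x ^ 11) := by
  unfold remainderQuartic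
  field_simp
  ring

lemma remainderQuartic_pos {a b : ℝ} (hb : 0 < b) (hab : 8 * b ≤ 5 * a) :
    0 < remainderQuartic a b := by
  obtain ⟨s, hs, rfl⟩ : ∃ s, 0 ≤ s ∧ a = 8 / 5 * b + s := ⟨a - 8 / 5 * b, by linarith, by ring⟩
  unfold remainderQuartic
  nlinarith [pow_pos hb 4, mul_nonneg (pow_pos hb 3).le hs,
    mul_nonneg (pow_pos hb 2).le (pow_nonneg hs 2), mul_nonneg hb.le (pow_nonneg hs 3),
    pow_nonneg hs 4]

lemma pi_sq_lt_ten : π ^ 2 < 10 := by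
  nlinarith [pi_lt_d2, pi_pos]

theorem x_sub_two_y1_add_z2_neg (x : ℝ) (hx : 4 ≤ x) :
    x - 2 * (x + π ^ 2 / (2 * x) - π ^ 4 / (8 * x ^ 3) + π ^ 6 / (16 * x ^ 5)
        - 5 * π ^ 8 / (128 * x ^ 7) + 7 * π ^ 10 / (256 * x ^ 9)
        - 21 * π ^ 12 / (1024 * x ^ 11))
      + (x + π ^ 2 / x - π ^ 4 / (2 * x ^ 3) + π ^ 6 / (2 * x ^ 5)
        - 5 * π ^ 8 / (8 * x ^ 7) + 7 * π ^ 10 / (8 * x ^ 9)) < 0 := by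
  have hx0 : 0 < x := by linarith
  rw [sub_two_mul_add_eq_remainderQuartic π x hx0.ne']
  have hQ : 0 < remainderQuartic (x ^ 2) (π ^ 2) :=
    remainderQuartic_pos (pow_pos pi_pos 2) (by nlinarith [pi_sq_lt_ten])
  exact div_neg_of_neg_of_pos (neg_neg_of_pos (mul_pos (pow_pos pi_pos 4) hQ)) (by positivity)
end
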